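/- Let (m, m') be a pair of distinct standard Young tableaux of the same shape λ with n boxes, and suppose (m, m') is a bridge pair with cut ī (the minimal index where their axial distances differ). Then the pair (g_ī(m), g_ī(m')) has cut ī − 1, i.e., applying the swap at the cut strictly decreases the cut. Consequently, iterating this operation from any bridge pair eventually produces a crossing pair. -/

import Mathlib

open Finset
open scoped Classical

/-- A filling `pos : Fin n → ℕ × ℕ` (the cell, as `(row, column)`, containing entry `k+1`)
is a standard Young tableau iff it is injective and every prefix of cells forms a
Young diagram. -/
def IsSYTFun (n : ℕ) (pos : Fin n → ℕ × ℕ) : Prop :=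
  Function.Injective pos ∧
    ∀ k : Fin n, ∃ Y : YoungDiagram,
      Y.cells = (Finset.univ.filter (fun j => j ≤ k)).image pos

/-- A standard Young tableau with `n` boxes. -/
structure SYT (n : ℕ) where
  pos : Fin n → ℕ × ℕ
  isSYT : IsSYTFun n pos

/-- The content (column minus row) of a cell. -/
def cellContent (p : ℕ × ℕ) : ℤ := (p.2 : ℤ) - (p.1 : ℤ)

/-- The axial distance `d_i(m)` between the entries `i` and `i+1` of `m`
(content of the cell of `i+1` minus content of the cell of `i`); `0` when `i`
is out of range. -/
def SYT.d {n : ℕ} (m : SYT n) (i : ℕ) : ℤ :=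
  if h : 0 < i ∧ i < n then
    cellContent (m.pos ⟨i, h.2⟩) -
      cellContent (m.pos ⟨i - 1, Nat.lt_of_le_of_lt (Nat.sub_le i 1) h.2⟩)
  else 0

/-- The shape of a standard Young tableau, as a finite set of cells. -/
def SYT.shape {n : ℕ} (m : SYT n) : Finset (ℕ × ℕ) := Finset.univ.image m.pos

/-- `g_i(m)`: the tableau obtained from `m` by exchanging the entries `i` and `i+1`,
if this again yields a standard Young tableau, and `m` otherwise. -/
noncomputable def SYT.g {n : ℕ} (m : SYT n) (i : ℕ) : SYT n :=
  if h : ∃ h' : 0 < i ∧ i < n,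
      IsSYTFun n (m.pos ∘ Equiv.swap
        (⟨i - 1, Nat.lt_of_le_of_lt (Nat.sub_le i 1) h'.2⟩ : Fin n) ⟨i, h'.2⟩) then
    ⟨_, h.choose_spec⟩
  else m

/-- `(m, m')` is a crossing pair: for some `i` the axial distances differ and the
swaps `g_i` act on both tableaux either both nontrivially or both trivially. -/
def Crossing {n : ℕ} (m m' : SYT n) : Prop :=
  ∃ i : ℕ, 0 < i ∧ i < n ∧ m.d i ≠ m'.d i ∧
    ((|m.d i| ≠ 1 ∧ |m'.d i| ≠ 1) ∨ (|m.d i| = 1 ∧ |m'.d i| = 1))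

/-!
The axial distance of two consecutive entries of a standard tableau has absolute value `1`
exactly when their cells are comparable (and then adjacent); otherwise the cells are
incomparable, the distance is at least `2` in absolute value, and the swap exchanging the two
entries acts. At the cut `i` of a bridge pair exactly one of the two swaps `g_i` acts, say on
`m`, and `i ≥ 2` because `|d_1| = 1` always. The swap leaves `d_k` unchanged for `k < i - 1`
and turns `d_{i-1}(m)` into `d_{i-1}(m) + d_i(m) ≠ d_{i-1}(m) = d_{i-1}(m')`, so the cut drops
to `i - 1`. A cut is positive, so iterating must reach a crossing pair.
-/

theorem two_le_abs_cellContent_sub {p q : ℕ × ℕ} (hpq : ¬ p ≤ q) (hqp : ¬ q ≤ p) :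
    2 ≤ |cellContent q - cellContent p| := by
  simp only [Prod.le_def, not_and_or, not_le] at hpq hqp
  rw [le_abs']
  simp only [cellContent]
  omega

theorem isSYTFun_iff {n : ℕ} {pos : Fin n → ℕ × ℕ} :
    IsSYTFun n pos ↔ IsLowerSet (Set.range pos) ∧ ∀ a b, pos a ≤ pos b → a ≤ b := by
  constructor
  · rintro ⟨hinj, hpre⟩
    have hmem : ∀ {c k}, c ≤ pos k → ∃ j ≤ k, pos j = c := fun {c k} hc => by
      obtain ⟨Y, hY⟩ := hpre k
      have hk : pos k ∈ Y.cells := by simpa [hY] using ⟨k, le_rfl, rfl⟩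
      simpa [hY] using Y.isLowerSet hc hk
    refine ⟨?_, fun a b h => ?_⟩
    · rintro c _ hc ⟨k, rfl⟩
      obtain ⟨j, -, rfl⟩ := hmem hc
      exact ⟨j, rfl⟩
    · obtain ⟨j, hj, e⟩ := hmem h
      exact hinj e ▸ hj
  · rintro ⟨hlow, hrefl⟩
    refine ⟨fun a b h => le_antisymm (hrefl a b h.le) (hrefl b a h.ge),
      fun k => ⟨⟨(univ.filter (· ≤ k)).image pos, ?_⟩, rfl⟩⟩
    rintro c d hdc hc
    simp only [coe_image, coe_filter, mem_univ, true_and, Set.mem_image] at hc ⊢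
    obtain ⟨j, hj, rfl⟩ := hc
    obtain ⟨i, rfl⟩ := hlow hdc ⟨j, rfl⟩
    exact ⟨i, (hrefl _ _ hdc).trans hj, rfl⟩

theorem Fin.le_or_eq_of_swap_le_swap {n j : ℕ} (hj : j + 1 < n) {a b : Fin n}
    (h : Equiv.swap (⟨j, by omega⟩ : Fin n) ⟨j + 1, hj⟩ a ≤
      Equiv.swap (⟨j, by omega⟩ : Fin n) ⟨j + 1, hj⟩ b) :
    a ≤ b ∨ (a = ⟨j + 1, hj⟩ ∧ b = ⟨j, by omega⟩) := by
  rw [Equiv.swap_apply_def, Equiv.swap_apply_def] at h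
  split_ifs at h <;> simp only [Fin.ext_iff, Fin.le_def] at * <;> omega

namespace SYT

variable {n : ℕ}

def IsCut (m m' : SYT n) (i : ℕ) : Prop :=
  m.d i ≠ m'.d i ∧ ∀ j < i, m.d j = m'.d j

theorem d_eq_of_pos_eq {m m' : SYT n} {i : ℕ}
    (h : ∀ a : Fin n, (a : ℕ) ≤ i → m.pos a = m'.pos a) : m.d i = m'.d i := by
  unfold SYT.d
  split_ifs
  · rw [h _ le_rfl, h _ (Nat.sub_le i 1)]
  · rfl

variable (m : SYT n)

theorem d_succ {j : ℕ} (hj : j + 1 < n) :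
    m.d (j + 1) = cellContent (m.pos ⟨j + 1, hj⟩) - cellContent (m.pos ⟨j, by omega⟩) := by
  rw [SYT.d, dif_pos ⟨j.succ_pos, hj⟩]
  rfl

theorem isLowerSet_range_pos : IsLowerSet (Set.range m.pos) := (isSYTFun_iff.1 m.isSYT).1

theorem le_of_pos_le {a b : Fin n} : m.pos a ≤ m.pos b → a ≤ b := (isSYTFun_iff.1 m.isSYT).2 a b

theorem pos_zero (hn : 0 < n) : m.pos ⟨0, hn⟩ = (0, 0) := by
  obtain ⟨b, hb⟩ := m.isLowerSet_range_pos (bot_le : ⊥ ≤ m.pos ⟨0, hn⟩) ⟨_, rfl⟩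
  have : b = ⟨0, hn⟩ := le_antisymm (m.le_of_pos_le (hb ▸ bot_le)) (Nat.zero_le _)
  rw [← this, hb]
  rfl

theorem not_pos_succ_le {j : ℕ} (hj : j + 1 < n) : ¬ m.pos ⟨j + 1, hj⟩ ≤ m.pos ⟨j, by omega⟩ :=
  fun h => by simpa [Fin.le_def] using m.le_of_pos_le h

theorem eq_pos_succ_of_lt_of_le {j : ℕ} (hj : j + 1 < n) {c : ℕ × ℕ}
    (hpc : m.pos ⟨j, by omega⟩ < c) (hcq : c ≤ m.pos ⟨j + 1, hj⟩) : c = m.pos ⟨j + 1, hj⟩ := by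
  obtain ⟨b, rfl⟩ := m.isLowerSet_range_pos hcq ⟨_, rfl⟩
  have h₁ := m.le_of_pos_le hpc.le
  have h₂ := m.le_of_pos_le hcq
  have h₃ : b ≠ ⟨j, by omega⟩ := fun e => hpc.ne (by rw [e])
  simp only [Fin.le_def, ne_eq, Fin.ext_iff] at h₁ h₂ h₃
  congr 1
  ext
  simp only
  omega

theorem abs_d_succ_eq_one_of_le {j : ℕ} (hj : j + 1 < n)
    (h : m.pos ⟨j, by omega⟩ ≤ m.pos ⟨j + 1, hj⟩) : |m.d (j + 1)| = 1 := by
  rw [m.d_succ hj]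
  set p := m.pos ⟨j, by omega⟩
  have hpq : p ≠ m.pos ⟨j + 1, hj⟩ := fun e => by simpa [Fin.ext_iff] using m.isSYT.1 e
  rcases h.1.lt_or_eq with h₁ | h₁
  · rw [← m.eq_pos_succ_of_lt_of_le hj (c := (p.1 + 1, p.2))
      (Prod.lt_of_lt_of_le (Nat.lt_succ_self _) le_rfl) ⟨h₁, h.2⟩]
    simp [cellContent]
  · have h₂ : p.2 < (m.pos ⟨j + 1, hj⟩).2 :=
      h.2.lt_of_ne fun e => hpq (Prod.ext h₁ e)
    rw [← m.eq_pos_succ_of_lt_of_le hj (c := (p.1, p.2 + 1))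
      (Prod.lt_of_le_of_lt le_rfl (Nat.lt_succ_self _)) ⟨h₁.le, h₂⟩]
    simp [cellContent]

theorem two_le_abs_d_succ_of_not_le {j : ℕ} (hj : j + 1 < n)
    (h : ¬ m.pos ⟨j, by omega⟩ ≤ m.pos ⟨j + 1, hj⟩) : 2 ≤ |m.d (j + 1)| := by
  rw [m.d_succ hj]
  exact two_le_abs_cellContent_sub h (m.not_pos_succ_le hj)

theorem abs_d_succ_eq_one_iff {j : ℕ} (hj : j + 1 < n) :
    |m.d (j + 1)| = 1 ↔ m.pos ⟨j, by omega⟩ ≤ m.pos ⟨j + 1, hj⟩ := by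
  refine ⟨fun h => ?_, m.abs_d_succ_eq_one_of_le hj⟩
  by_contra hle
  have := m.two_le_abs_d_succ_of_not_le hj hle
  omega

theorem abs_d_one (hn : 1 < n) : |m.d 1| = 1 :=
  (m.abs_d_succ_eq_one_iff hn).2 (m.pos_zero (by omega) ▸ bot_le)

theorem isSYTFun_comp_swap_iff {j : ℕ} (hj : j + 1 < n) :
    IsSYTFun n (m.pos ∘ Equiv.swap ⟨j, by omega⟩ ⟨j + 1, hj⟩) ↔
      ¬ m.pos ⟨j, by omega⟩ ≤ m.pos ⟨j + 1, hj⟩ := by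
  rw [isSYTFun_iff, EquivLike.range_comp]
  refine ⟨fun ⟨_, hrefl⟩ hle => ?_, fun h => ⟨m.isLowerSet_range_pos, fun a b hab => ?_⟩⟩
  · have := hrefl ⟨j + 1, hj⟩ ⟨j, by omega⟩
    simp [Equiv.swap_apply_left, Equiv.swap_apply_right, Fin.le_def, hle] at this
  · rcases Fin.le_or_eq_of_swap_le_swap hj (m.le_of_pos_le hab) with hab' | ⟨ha, hb⟩
    · exact hab'
    · rw [ha, hb, Function.comp_apply, Function.comp_apply, Equiv.swap_apply_left,
        Equiv.swap_apply_right] at hab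
      exact absurd hab h

theorem g_succ_of_le {j : ℕ} (hj : j + 1 < n) (h : m.pos ⟨j, by omega⟩ ≤ m.pos ⟨j + 1, hj⟩) :
    m.g (j + 1) = m := by
  rw [SYT.g, dif_neg]
  rintro ⟨_, hswap⟩
  exact (m.isSYTFun_comp_swap_iff hj).1 hswap h

theorem pos_g_succ_of_not_le {j : ℕ} (hj : j + 1 < n)
    (h : ¬ m.pos ⟨j, by omega⟩ ≤ m.pos ⟨j + 1, hj⟩) :
    (m.g (j + 1)).pos = m.pos ∘ Equiv.swap ⟨j, by omega⟩ ⟨j + 1, hj⟩ := by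
  rw [SYT.g, dif_pos ⟨⟨j.succ_pos, hj⟩, (m.isSYTFun_comp_swap_iff hj).2 h⟩]
  rfl

theorem d_g_succ_of_lt {i j : ℕ} (hj : j + 1 < n) (h : ¬ m.pos ⟨j, by omega⟩ ≤ m.pos ⟨j + 1, hj⟩)
    (hi : i < j) : (m.g (j + 1)).d i = m.d i :=
  d_eq_of_pos_eq fun a ha => by
    rw [m.pos_g_succ_of_not_le hj h, Function.comp_apply, Equiv.swap_apply_of_ne_of_ne]
    all_goals simp only [ne_eq, Fin.ext_iff]; omega

theorem d_g_succ_succ {j : ℕ} (hj : j + 2 < n)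
    (h : ¬ m.pos ⟨j + 1, by omega⟩ ≤ m.pos ⟨j + 2, hj⟩) :
    (m.g (j + 2)).d (j + 1) = m.d (j + 1) + m.d (j + 2) := by
  rw [d_succ _ (by omega), d_succ _ (by omega), d_succ _ hj, m.pos_g_succ_of_not_le hj h]
  simp only [Function.comp_apply, Equiv.swap_apply_def, Fin.mk.injEq]
  split_ifs <;> omega

theorem foldl_range_succ_g (i k : ℕ) (t : SYT n) :
    (List.range (k + 1)).foldl (fun t j => t.g (i - j)) t =
      (List.range k).foldl (fun t j => t.g (i - 1 - j)) (t.g i) := by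
  rw [List.range_succ_eq_map, List.foldl_cons, List.foldl_map]
  congr 2
  ext t j
  rw [Nat.sub_sub, Nat.add_comm]

namespace IsCut

variable {m m' : SYT n} {i : ℕ}

theorem symm (h : IsCut m m' i) : IsCut m' m i :=
  ⟨h.1.symm, fun j hj => (h.2 j hj).symm⟩

theorem pos (h : IsCut m m' i) : 0 < i :=
  Nat.pos_of_ne_zero fun hi => h.1 (by simp [SYT.d, hi])

theorem lt (h : IsCut m m' i) : i < n :=
  lt_of_not_ge fun hi => h.1 (by simp [SYT.d, hi.not_gt])

theorem g_of_abs_d_ne_one (h : IsCut m m' i) (hm : |m.d i| ≠ 1) (hm' : |m'.d i| = 1) :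
    IsCut (m.g i) (m'.g i) (i - 1) := by
  have hi : 2 ≤ i := by
    by_contra hlt
    obtain rfl : i = 1 := by have := h.pos; omega
    exact hm (m.abs_d_one h.lt)
  obtain ⟨j, rfl⟩ : ∃ j, i = j + 2 := ⟨i - 2, by omega⟩
  have hn : j + 2 < n := h.lt
  have hle : ¬ m.pos ⟨j + 1, by omega⟩ ≤ m.pos ⟨j + 2, hn⟩ :=
    fun hle => hm ((m.abs_d_succ_eq_one_iff hn).2 hle)
  have hg' : m'.g (j + 2) = m' := m'.g_succ_of_le hn ((m'.abs_d_succ_eq_one_iff hn).1 hm')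
  have hd : m.d (j + 2) ≠ 0 :=
    abs_pos.1 (two_pos.trans_le (m.two_le_abs_d_succ_of_not_le hn hle))
  refine ⟨?_, fun k hk => ?_⟩
  · change (m.g (j + 2)).d (j + 1) ≠ (m'.g (j + 2)).d (j + 1)
    rw [m.d_g_succ_succ hn hle, hg', ← h.2 (j + 1) (by omega)]
    simpa using hd
  · rw [m.d_g_succ_of_lt hn hle (by omega), hg', h.2 k (by omega)]

theorem g_of_not_crossing (h : IsCut m m' i) (hb : ¬ Crossing m m') :
    IsCut (m.g i) (m'.g i) (i - 1) := by
  have hone : (|m.d i| ≠ 1 ∧ |m'.d i| = 1) ∨ (|m.d i| = 1 ∧ |m'.d i| ≠ 1) := by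
    by_contra hc
    exact hb ⟨i, h.pos, h.lt, h.1, by tauto⟩
  rcases hone with ⟨hm, hm'⟩ | ⟨hm, hm'⟩
  · exact h.g_of_abs_d_ne_one hm hm'
  · exact (h.symm.g_of_abs_d_ne_one hm' hm).symm

theorem exists_crossing_foldl_g (h : IsCut m m' i) (hb : ¬ Crossing m m') :
    ∃ k, Crossing ((List.range k).foldl (fun t j => t.g (i - j)) m)
      ((List.range k).foldl (fun t j => t.g (i - j)) m') := by
  induction i using Nat.strong_induction_on generalizing m m' with
  | _ i ih =>
  by_cases hcross : Crossing (m.g i) (m'.g i)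
  · exact ⟨1, by simpa using hcross⟩
  · obtain ⟨k, hk⟩ := ih (i - 1) (Nat.sub_lt h.pos one_pos) (h.g_of_not_crossing hb) hcross
    exact ⟨k + 1, by rwa [foldl_range_succ_g, foldl_range_succ_g]⟩

end IsCut

end SYT

theorem bridge_cut_decreases_general (n : ℕ) (m m' : SYT n) (hbridge : ¬ Crossing m m')
    (ic : ℕ) (hcut : m.d ic ≠ m'.d ic) (hmin : ∀ j < ic, m.d j = m'.d j) :
    ((m.g ic).d (ic - 1) ≠ (m'.g ic).d (ic - 1) ∧
      ∀ j < ic - 1, (m.g ic).d j = (m'.g ic).d j) ∧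
    ∃ k : ℕ, Crossing
      ((List.range k).foldl (fun t j => t.g (ic - j)) m)
      ((List.range k).foldl (fun t j => t.g (ic - j)) m') :=
  ⟨SYT.IsCut.g_of_not_crossing ⟨hcut, hmin⟩ hbridge,
    SYT.IsCut.exists_crossing_foldl_g ⟨hcut, hmin⟩ hbridge⟩

/-- For a bridge pair with cut `ic`, applying the swap `g_ic` to both tableaux
strictly decreases the cut to `ic - 1`; consequently iterating the swaps at the
successive cuts eventually produces a crossing pair. -/
theorem bridge_cut_decreases (n : ℕ) (m m' : SYT n) (hne : m ≠ m')
    (hshape : m.shape = m'.shape) (hbridge : ¬ Crossing m m')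
    (ic : ℕ) (h0 : 0 < ic) (hn : ic < n)
    (hcut : m.d ic ≠ m'.d ic) (hmin : ∀ j < ic, m.d j = m'.d j) :
    ((m.g ic).d (ic - 1) ≠ (m'.g ic).d (ic - 1) ∧
      ∀ j < ic - 1, (m.g ic).d j = (m'.g ic).d j) ∧
    ∃ k : ℕ, Crossing
      ((List.range k).foldl (fun t j => t.g (ic - j)) m)
      ((List.range k).foldl (fun t j => t.g (ic - j)) m') :=
  bridge_cut_decreases_general n m m' hbridge ic hcut hmin
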